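/- arXiv:1409.5515 — 2 statements merged into one kernel-verified Lean document; each statement's English description precedes it below -/
import Mathlib

section
/- Under the hypotheses of Lemma 1 (F built from a Laplacian L̃ whose zero eigenvalue has geometric multiplicity q, positive diagonal Δ̃ on nodes with neighbors, positive diagonal gain Q*, and R > 0), the kernel of F has dimension exactly q; in particular, if the graph is strongly connected, ker F is one-dimensional and spanned by (1, 0). -/
/-!
If `F (x, y) = 0`, the first block row gives `L̃ x = Δ̃ y`; substituting this into the second
block row leaves `(1/R) Q* y = 0`, so `y = 0` and then `L̃ x = 0`. Hence `ker F = ker L̃ × {0}`,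
the image of `ker L̃` under the injective map `x ↦ (x, 0)`.
-/

open Matrix

def sumInlZero (m n K : Type*) [Semiring K] : (m → K) →ₗ[K] (m ⊕ n → K) :=
  (LinearEquiv.sumArrowLequivProdArrow m n K K).symm.toLinearMap ∘ₗ LinearMap.inl K _ _

section

variable {m n K : Type*}

theorem sumInlZero_apply [Semiring K] (x : m → K) : sumInlZero m n K x = Sum.elim x 0 := rfl

theorem sumInlZero_injective [Semiring K] : Function.Injective (sumInlZero m n K) :=
  fun _ _ h =>
    LinearMap.inl_injective ((LinearEquiv.sumArrowLequivProdArrow m n K K).symm.injective h)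

variable [Field K] [Fintype n] [DecidableEq n]

theorem fromBlocks_mulVec_sumElim_eq_zero_iff (L Δ Q : Matrix n n K) (hQ : IsUnit Q) {c : K}
    (hc : c ≠ 0) (x y : n → K) :
    fromBlocks L (-Δ) (Q * L) (-(Q * (c • 1 + Δ))) *ᵥ Sum.elim x y = 0 ↔
      L *ᵥ x = 0 ∧ y = 0 := by
  simp only [fromBlocks_mulVec, Sum.elim_comp_inl, Sum.elim_comp_inr, ← Sum.elim_zero_zero,
    Sum.elim_eq_iff, neg_mulVec, ← sub_eq_add_neg, sub_eq_zero, ← mulVec_mulVec, add_mulVec,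
    smul_mulVec, one_mulVec]
  constructor
  · rintro ⟨hLx, hQLx⟩
    rw [hLx] at hQLx
    obtain rfl : y = 0 := by simpa [hc] using mulVec_injective_of_isUnit hQ hQLx
    simpa using hLx
  · rintro ⟨hx, rfl⟩
    simp [hx]

theorem ker_fromBlocks_eq_map_ker (L Δ Q : Matrix n n K) (hQ : IsUnit Q) {c : K} (hc : c ≠ 0) :
    LinearMap.ker (fromBlocks L (-Δ) (Q * L) (-(Q * (c • 1 + Δ)))).mulVecLin =
      (LinearMap.ker L.mulVecLin).map (sumInlZero n n K) := by
  ext v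
  obtain ⟨x, y, rfl⟩ : ∃ x y, v = Sum.elim x y :=
    ⟨v ∘ Sum.inl, v ∘ Sum.inr, by ext (i | i) <;> rfl⟩
  simp only [LinearMap.mem_ker, mulVecLin_apply,
    fromBlocks_mulVec_sumElim_eq_zero_iff L Δ Q hQ hc, Submodule.mem_map, sumInlZero_apply,
    Sum.elim_eq_iff]
  constructor
  · rintro ⟨hx, rfl⟩
    exact ⟨x, hx, rfl, rfl⟩
  · rintro ⟨x, hx, rfl, rfl⟩
    exact ⟨hx, rfl⟩

end

theorem kernel_of_F_dimension_general (N : ℕ)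
    (L : Matrix (Fin N) (Fin N) ℝ)
    (d q : Fin N → ℝ) (hq : ∀ i, 0 < q i) (R : ℝ) (hR : 0 < R) :
    let Δ : Matrix (Fin N) (Fin N) ℝ := Matrix.diagonal d
    let Q : Matrix (Fin N) (Fin N) ℝ := Matrix.diagonal q
    let F : Matrix (Fin N ⊕ Fin N) (Fin N ⊕ Fin N) ℝ :=
      Matrix.fromBlocks L (-Δ) (Q * L) (-(Q * ((1 / R) • (1 : Matrix (Fin N) (Fin N) ℝ) + Δ)))
    Module.finrank ℝ (LinearMap.ker F.mulVecLin) =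
      Module.finrank ℝ (LinearMap.ker L.mulVecLin) ∧
    (LinearMap.ker L.mulVecLin = Submodule.span ℝ {fun _ => (1 : ℝ)} →
      LinearMap.ker F.mulVecLin =
        Submodule.span ℝ {Sum.elim (fun _ => (1 : ℝ)) (fun _ => (0 : ℝ))}) := by
  intro Δ Q F
  have hQ : IsUnit Q := isUnit_diagonal.mpr (Pi.isUnit_iff.mpr fun i => (hq i).ne'.isUnit)
  have hker : LinearMap.ker F.mulVecLin = (LinearMap.ker L.mulVecLin).map (sumInlZero _ _ ℝ) :=
    ker_fromBlocks_eq_map_ker L Δ Q hQ (one_div_ne_zero hR.ne')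
  refine ⟨?_, fun hL => ?_⟩
  · rw [hker]
    exact (Submodule.equivMapOfInjective _ sumInlZero_injective _).finrank_eq.symm
  · rw [hker, hL, Submodule.map_span, Set.image_singleton]
    rfl

/-- Lemma 1 (kernel dimension): for
`F = [[L̃, -Δ̃], [Q* L̃, -Q*((1/R) I + Δ̃)]]` with `L̃ · 1 = 0`, positive diagonal
`Δ̃` and `Q*`, and `R > 0`, the kernel of `F` has the same dimension `q` as the kernel of
`L̃` (the geometric multiplicity of the zero eigenvalue of `L̃`); in particular, if
`ker L̃` is spanned by the all-ones vector (strong connectivity), then `ker F` is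
one-dimensional, spanned by `(1, 0)`. -/
theorem kernel_of_F_dimension (N : ℕ)
    (L : Matrix (Fin N) (Fin N) ℝ) (hL : L *ᵥ (fun _ => (1 : ℝ)) = 0)
    (d q : Fin N → ℝ) (hd : ∀ i, 0 < d i) (hq : ∀ i, 0 < q i) (R : ℝ) (hR : 0 < R) :
    let Δ : Matrix (Fin N) (Fin N) ℝ := Matrix.diagonal d
    let Q : Matrix (Fin N) (Fin N) ℝ := Matrix.diagonal q
    let F : Matrix (Fin N ⊕ Fin N) (Fin N ⊕ Fin N) ℝ :=
      Matrix.fromBlocks L (-Δ) (Q * L) (-(Q * ((1 / R) • (1 : Matrix (Fin N) (Fin N) ℝ) + Δ)))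
    Module.finrank ℝ (LinearMap.ker F.mulVecLin) =
      Module.finrank ℝ (LinearMap.ker L.mulVecLin) ∧
    (LinearMap.ker L.mulVecLin = Submodule.span ℝ {fun _ => (1 : ℝ)} →
      LinearMap.ker F.mulVecLin =
        Submodule.span ℝ {Sum.elim (fun _ => (1 : ℝ)) (fun _ => (0 : ℝ))}) :=
  kernel_of_F_dimension_general N L d q hq R hR
end

section
/- Let L̃ be the scaled Laplacian of a strongly connected digraph with left null eigenvector ω (ωᵀ L̃ = 0), Δ̃ the scaled degree matrix, Ξ = Diag(Ξ_i) with Ξ_i = 1/Q*_i, Q* = Ξ^{-1}, and R > 0. Then the row vector wᵀ = [ωᵀ(I + RΔ̃), −ωᵀ RΞΔ̃] satisfies wᵀ F = 0 for F = [[L̃, -Δ̃],[Q* L̃, -Q*((1/R)I + Δ̃)]]. -/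
open Matrix

/-- The row vector `wᵀ = [ωᵀ(I + RΔ̃), −ωᵀ R Ξ Δ̃]` is a left null vector of
`F = [[L̃, -Δ̃], [Q* L̃, -Q*((1/R) I + Δ̃)]]`, where `ωᵀ L̃ = 0`, `Q* = Ξ⁻¹` with
`Ξ = Diag(Ξᵢ)`, `Ξᵢ = 1/Q*ᵢ > 0`, `Δ̃` positive diagonal and `R > 0`. -/
theorem left_null_vector_of_F (N : ℕ)
    (L : Matrix (Fin N) (Fin N) ℝ) (ω : Fin N → ℝ) (hω : ω ᵥ* L = 0)
    (d q ξ : Fin N → ℝ) (hd : ∀ i, 0 < d i) (hq : ∀ i, 0 < q i)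
    (hξ : ∀ i, ξ i = 1 / q i) (R : ℝ) (hR : 0 < R) :
    let Δ : Matrix (Fin N) (Fin N) ℝ := Matrix.diagonal d
    let Q : Matrix (Fin N) (Fin N) ℝ := Matrix.diagonal q
    let Ξ : Matrix (Fin N) (Fin N) ℝ := Matrix.diagonal ξ
    let F : Matrix (Fin N ⊕ Fin N) (Fin N ⊕ Fin N) ℝ :=
      Matrix.fromBlocks L (-Δ) (Q * L) (-(Q * ((1 / R) • (1 : Matrix (Fin N) (Fin N) ℝ) + Δ)))
    let w : Fin N ⊕ Fin N → ℝ :=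
      Sum.elim (ω ᵥ* ((1 : Matrix (Fin N) (Fin N) ℝ) + R • Δ)) (-(ω ᵥ* (R • (Ξ * Δ))))
    w ᵥ* F = 0 := by
  intro Δ Q Ξ F w
  have hΔQ : R • (Ξ * Δ) * Q = R • Δ := by
    show R • (diagonal ξ * diagonal d) * diagonal q = R • diagonal d
    rw [diagonal_mul_diagonal, Matrix.smul_mul, diagonal_mul_diagonal]
    have : (fun i => ξ i * d i * q i) = d := by
      funext i
      rw [hξ i]
      field_simp [(hq i).ne']
    rw [this]
  have hM2 : -(((1 : Matrix (Fin N) (Fin N) ℝ) + R • Δ) * Δ)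
      + (R • (Ξ * Δ)) * (Q * ((1 / R) • (1 : Matrix (Fin N) (Fin N) ℝ) + Δ)) = 0 := by
    show -(((1 : Matrix (Fin N) (Fin N) ℝ) + R • diagonal d) * diagonal d)
      + (R • (diagonal ξ * diagonal d)) *
        (diagonal q * ((1 / R) • (1 : Matrix (Fin N) (Fin N) ℝ) + diagonal d)) = 0
    ext i j
    by_cases h : i = j
    · subst h
      simp [Matrix.mul_apply, Matrix.one_apply, Matrix.diagonal_apply, Finset.sum_ite_eq,
        Finset.sum_ite_eq']
      rw [hξ i]
      field_simp [(hq i).ne', hR.ne']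
      ring
    · simp [Matrix.mul_apply, Matrix.one_apply, Matrix.diagonal_apply, h, Finset.sum_ite_eq,
        Finset.sum_ite_eq']
  have hblocks : w ᵥ* F =
      Sum.elim ((ω ᵥ* ((1 : Matrix (Fin N) (Fin N) ℝ) + R • Δ)) ᵥ* L
          + (-(ω ᵥ* (R • (Ξ * Δ)))) ᵥ* (Q * L))
        ((ω ᵥ* ((1 : Matrix (Fin N) (Fin N) ℝ) + R • Δ)) ᵥ* (-Δ)
          + (-(ω ᵥ* (R • (Ξ * Δ)))) ᵥ*
            (-(Q * ((1 / R) • (1 : Matrix (Fin N) (Fin N) ℝ) + Δ)))) := by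
    rw [show w ᵥ* F = Sum.elim _ _ ᵥ* fromBlocks L (-Δ) (Q * L)
      (-(Q * ((1 / R) • (1 : Matrix (Fin N) (Fin N) ℝ) + Δ))) from rfl, vecMul_fromBlocks]
    rfl
  rw [hblocks]
  have e1 : (ω ᵥ* ((1 : Matrix (Fin N) (Fin N) ℝ) + R • Δ)) ᵥ* L
      + (-(ω ᵥ* (R • (Ξ * Δ)))) ᵥ* (Q * L) = 0 := by
    rw [neg_vecMul, vecMul_vecMul, vecMul_vecMul, ← Matrix.mul_assoc, hΔQ,
      ← sub_eq_add_neg, ← vecMul_sub]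
    have : (1 : Matrix (Fin N) (Fin N) ℝ) + R • Δ - R • Δ = 1 := add_sub_cancel_right _ _
    rw [show ((1 : Matrix (Fin N) (Fin N) ℝ) + R • Δ) * L - R • Δ * L
        = ((1 : Matrix (Fin N) (Fin N) ℝ) + R • Δ - R • Δ) * L from (Matrix.sub_mul _ _ _).symm,
      this, Matrix.one_mul, hω]
  have e2 : (ω ᵥ* ((1 : Matrix (Fin N) (Fin N) ℝ) + R • Δ)) ᵥ* (-Δ)
      + (-(ω ᵥ* (R • (Ξ * Δ)))) ᵥ*
        (-(Q * ((1 / R) • (1 : Matrix (Fin N) (Fin N) ℝ) + Δ))) = 0 := by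
    rw [neg_vecMul, vecMul_neg, vecMul_neg, neg_neg, vecMul_vecMul, vecMul_vecMul,
      ← vecMul_neg, ← vecMul_add, hM2, vecMul_zero]
  rw [e1, e2]
  funext x
  cases x <;> rfl
end
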